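/- Let X be a connected simple countable graph with all vertex degrees at most M, let t be a complex number with |t| < 1, and set α(t) = (M + √(M² + 4(|t|+1)M))/2. Then for every m ≥ 0, the bounded operator C_m(t) on ℓ²(VX), defined by (C_m(t)f)(x) = ∑_{C path starting at x, ℓ(C)=m} t^{bc(C)} f(t(C)), satisfies ‖C_m(t)‖ ≤ α(t)^m. -/

import Mathlib

/-!
Since `‖t‖ ≤ 1`, each entry `‖C_m(t)(x, y)‖` is at most the number of walks of length `m` from `x`
to `y`. A walk branches in at most `M` ways at each step, and reversal swaps the endpoints, so every
row and every column of `(‖C_m(t)(x, y)‖)` sums to at most `M ^ m`. The Schur test then gives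
`‖C_m(t)‖ ≤ M ^ m`, and `M ≤ α(t)`.
-/

open scoped BigOperators
open SimpleGraph

noncomputable section

namespace BZ

open Classical

variable {V : Type*} (G : SimpleGraph V)

/-- Bump count of a walk: the number of indices `i` with `e_i = ē_{i+1}`. -/
def bc {x y : V} (w : G.Walk x y) : ℕ :=
  ((w.darts.zip w.darts.tail).filter fun p => p.2 = p.1.symm).length

/-- A closed walk has a tail if `e_m = ē_1` (with `m ≥ 1`). -/
def hasTail {x : V} (w : G.Walk x x) : Prop :=
  1 ≤ w.length ∧ w.darts.getLast? = w.darts.head?.map SimpleGraph.Dart.symm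

/-- Cyclic bump count of a closed walk: `cbc = bc + 1` if the walk has a tail, else `bc`. -/
def cbc {x : V} (w : G.Walk x x) : ℕ :=
  bc G w + if hasTail G w then 1 else 0

/-- `C_m(t)(x, y)`: the weighted count `∑ t^{bc(C)}` over walks from `x` to `y` of length `m`. -/
def Cent (t : ℂ) (m : ℕ) (x y : V) : ℂ :=
  ∑' w : {w : G.Walk x y // w.length = m}, t ^ bc G w.1

/-- `α(t) = (M + √(M² + 4(|t|+1)M))/2`, where `M` bounds the degrees. -/
def alpha (M : ℕ) (t : ℂ) : ℝ :=
  ((M : ℝ) + Real.sqrt ((M : ℝ) ^ 2 + 4 * (‖t‖ + 1) * (M : ℝ))) / 2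

/-- The `ℓ²`-space on the vertex set `V`. -/
abbrev L2V (V : Type*) := lp (fun _ : V => ℂ) 2

variable [DecidableEq V]

section SchurTest

variable {𝕜 : Type*} [RCLike 𝕜] {ι κ : Type*}

theorem _root_.lp.hasSum_norm_sq {E : ι → Type*} [∀ i, NormedAddCommGroup (E i)] (f : lp E 2) :
    HasSum (fun i => ‖f i‖ ^ 2) (‖f‖ ^ 2) := by
  simpa using lp.hasSum_norm (p := 2) (by norm_num) f

theorem _root_.lp.norm_sum_single_sq {E : ι → Type*} [∀ i, NormedAddCommGroup (E i)]
    [DecidableEq ι] (f : ∀ i, E i) (s : Finset ι) :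
    ‖∑ i ∈ s, lp.single 2 i (f i)‖ ^ 2 = ∑ i ∈ s, ‖f i‖ ^ 2 := by
  simpa using lp.norm_sum_single (p := 2) (by norm_num) f s

theorem _root_.ContinuousLinearMap.apply_sum_single_apply {p : ENNReal} [Fact (1 ≤ p)]
    [DecidableEq ι] (T : lp (fun _ : ι => 𝕜) p →L[𝕜] lp (fun _ : κ => 𝕜) p) (s : Finset ι)
    (c : ι → 𝕜) (x : κ) :
    T (∑ y ∈ s, lp.single p y (c y)) x = ∑ y ∈ s, c y * T (lp.single p y 1) x := by
  have hsingle (y : ι) : lp.single p y (c y) = c y • lp.single (E := fun _ : ι => 𝕜) p y 1 := by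
    rw [← lp.single_smul, smul_eq_mul, mul_one]
  simp only [hsingle, map_sum, map_smul, lp.coeFn_sum, lp.coeFn_smul, Finset.sum_apply,
    Pi.smul_apply, smul_eq_mul]

theorem _root_.ContinuousLinearMap.opNorm_le_of_sum_single {p : ENNReal} [Fact (1 ≤ p)]
    (hp : p ≠ ⊤) {E : ι → Type*} [∀ i, NormedAddCommGroup (E i)] [∀ i, NormedSpace 𝕜 (E i)]
    [DecidableEq ι] {F : Type*} [NormedAddCommGroup F] [NormedSpace 𝕜 F] (T : lp E p →L[𝕜] F) {C : ℝ}
    (hC : 0 ≤ C) (h : ∀ (s : Finset ι) (c : ∀ i, E i),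
      ‖T (∑ i ∈ s, lp.single p i (c i))‖ ≤ C * ‖∑ i ∈ s, lp.single p i (c i)‖) :
    ‖T‖ ≤ C := by
  refine T.opNorm_le_bound hC fun f => ?_
  have hclosed : IsClosed {g | ‖T g‖ ≤ C * ‖g‖} :=
    isClosed_le T.continuous.norm (continuous_const.mul continuous_norm)
  exact hclosed.mem_of_tendsto (lp.hasSum_single hp f) (.of_forall fun s => h s f)

theorem _root_.ContinuousLinearMap.norm_sq_apply_sum_single_le [DecidableEq ι]
    (T : lp (fun _ : ι => 𝕜) 2 →L[𝕜] lp (fun _ : κ => 𝕜) 2) {R K : ℝ} (hR : 0 ≤ R)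
    (hrow : ∀ (x : κ) (s : Finset ι), ∑ y ∈ s, ‖T (lp.single 2 y 1) x‖ ≤ R)
    (hcol : ∀ (y : ι) (s : Finset κ), ∑ x ∈ s, ‖T (lp.single 2 y 1) x‖ ≤ K)
    (s : Finset ι) (c : ι → 𝕜) :
    ‖T (∑ y ∈ s, lp.single 2 y (c y))‖ ^ 2 ≤ R * K * ‖∑ y ∈ s, lp.single 2 y (c y)‖ ^ 2 := by
  set a : κ → ι → ℝ := fun x y => ‖T (lp.single 2 y 1) x‖ with ha
  have hcol_summable (y : ι) : Summable (a · y) :=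
    summable_of_sum_le (fun _ => norm_nonneg _) (hcol y)
  have hcol_tsum (y : ι) : ∑' x, a x y ≤ K := (hcol_summable y).tsum_le_of_sum_le (hcol y)
  have hrow_cauchySchwarz (x : κ) :
      ‖T (∑ y ∈ s, lp.single 2 y (c y)) x‖ ^ 2 ≤ R * ∑ y ∈ s, a x y * ‖c y‖ ^ 2 := by
    calc ‖T (∑ y ∈ s, lp.single 2 y (c y)) x‖ ^ 2
        ≤ (∑ y ∈ s, a x y * ‖c y‖) ^ 2 := by
          rw [T.apply_sum_single_apply]
          gcongr
          exact (norm_sum_le _ _).trans_eq (by simp only [ha, norm_mul, mul_comm])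
      _ ≤ (∑ y ∈ s, a x y) * ∑ y ∈ s, a x y * ‖c y‖ ^ 2 :=
          Finset.sum_sq_le_sum_mul_sum_of_sq_le_mul s (fun _ _ => norm_nonneg _)
            (fun _ _ => by positivity) (fun _ _ => le_of_eq (by ring))
      _ ≤ R * ∑ y ∈ s, a x y * ‖c y‖ ^ 2 := by
          gcongr
          exact hrow x s
  have hsummable : Summable fun x => R * ∑ y ∈ s, a x y * ‖c y‖ ^ 2 :=
    (summable_sum fun y _ => (hcol_summable y).mul_right _).mul_left R
  calc ‖T (∑ y ∈ s, lp.single 2 y (c y))‖ ^ 2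
      = ∑' x, ‖T (∑ y ∈ s, lp.single 2 y (c y)) x‖ ^ 2 := (lp.hasSum_norm_sq _).tsum_eq.symm
    _ ≤ ∑' x, R * ∑ y ∈ s, a x y * ‖c y‖ ^ 2 :=
        (lp.hasSum_norm_sq _).summable.tsum_le_tsum hrow_cauchySchwarz hsummable
    _ = R * ∑ y ∈ s, (∑' x, a x y) * ‖c y‖ ^ 2 := by
        rw [tsum_mul_left, Summable.tsum_finsetSum fun y _ => (hcol_summable y).mul_right _]
        simp_rw [tsum_mul_right]
    _ ≤ R * ∑ y ∈ s, K * ‖c y‖ ^ 2 := by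
        gcongr with y
        exact hcol_tsum y
    _ = R * K * ‖∑ y ∈ s, lp.single 2 y (c y)‖ ^ 2 := by
        rw [lp.norm_sum_single_sq, ← Finset.mul_sum, mul_assoc]

/-- **Schur test**. -/
theorem _root_.ContinuousLinearMap.opNorm_le_sqrt_mul_of_schur [DecidableEq ι]
    (T : lp (fun _ : ι => 𝕜) 2 →L[𝕜] lp (fun _ : κ => 𝕜) 2) {R K : ℝ}
    (hrow : ∀ (x : κ) (s : Finset ι), ∑ y ∈ s, ‖T (lp.single 2 y 1) x‖ ≤ R)
    (hcol : ∀ (y : ι) (s : Finset κ), ∑ x ∈ s, ‖T (lp.single 2 y 1) x‖ ≤ K) :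
    ‖T‖ ≤ √(R * K) := by
  rcases isEmpty_or_nonempty κ with hκ | ⟨⟨x₀⟩⟩
  · refine T.opNorm_le_bound (Real.sqrt_nonneg _) fun f => ?_
    rw [show T f = 0 from lp.ext (funext isEmptyElim), norm_zero]
    positivity
  have hR : 0 ≤ R := by simpa using hrow x₀ ∅
  refine T.opNorm_le_of_sum_single (by norm_num) (Real.sqrt_nonneg _) fun s c => ?_
  rw [← Real.sqrt_sq (norm_nonneg _), ← Real.sqrt_sq (norm_nonneg (∑ i ∈ s, _)),
    ← Real.sqrt_mul' _ (sq_nonneg _)]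
  exact Real.sqrt_le_sqrt (T.norm_sq_apply_sum_single_le hR hrow hcol s c)

end SchurTest

section WalkCounting

variable {V : Type*} [DecidableEq V] (G : SimpleGraph V) [G.LocallyFinite]

theorem card_finsetWalkLength_comm (m : ℕ) (x y : V) :
    (G.finsetWalkLength m x y).card = (G.finsetWalkLength m y x).card :=
  Finset.card_nbij' Walk.reverse Walk.reverse
    (fun w hw => by simpa [mem_finsetWalkLength_iff] using hw)
    (fun w hw => by simpa [mem_finsetWalkLength_iff] using hw)
    (fun w _ => w.reverse_reverse) (fun w _ => w.reverse_reverse)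

theorem sum_card_finsetWalkLength_le {M : ℕ} (hM : ∀ v, G.degree v ≤ M) (m : ℕ) (x : V)
    (s : Finset V) : ∑ y ∈ s, (G.finsetWalkLength m x y).card ≤ M ^ m := by
  induction m generalizing x with
  | zero =>
    calc ∑ y ∈ s, (G.finsetWalkLength 0 x y).card = ∑ y ∈ s, if x = y then 1 else 0 := by
          refine Finset.sum_congr rfl fun y _ => ?_
          rcases eq_or_ne x y with rfl | h <;> simp [finsetWalkLength, *]
      _ ≤ 1 := by
          rw [Finset.sum_ite_eq]
          split_ifs <;> simp
  | succ m ih =>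
    calc ∑ y ∈ s, (G.finsetWalkLength (m + 1) x y).card
        ≤ ∑ y ∈ s, ∑ w : G.neighborSet x, (G.finsetWalkLength m w y).card := by
          gcongr with y
          exact Finset.card_biUnion_le.trans_eq (by simp)
      _ = ∑ w : G.neighborSet x, ∑ y ∈ s, (G.finsetWalkLength m w y).card := Finset.sum_comm
      _ ≤ ∑ _w : G.neighborSet x, M ^ m := by gcongr; exact ih _
      _ = G.degree x * M ^ m := by
          rw [Finset.sum_const, Finset.card_univ, card_neighborSet_eq_degree, smul_eq_mul]
      _ ≤ M ^ (m + 1) := by rw [pow_succ']; gcongr; exact hM x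

theorem norm_Cent_le_card {t : ℂ} (ht : ‖t‖ ≤ 1) (m : ℕ) (x y : V) :
    ‖Cent G t m x y‖ ≤ (G.finsetWalkLength m x y).card := by
  have hCent : Cent G t m x y = ∑ w ∈ G.finsetWalkLength m x y, t ^ bc G w := by
    rw [Cent, ← Finset.tsum_subtype]
    exact ((Equiv.subtypeEquivRight fun _ => mem_finsetWalkLength_iff).tsum_eq _).symm
  rw [hCent]
  calc ‖∑ w ∈ G.finsetWalkLength m x y, t ^ bc G w‖
      ≤ ∑ w ∈ G.finsetWalkLength m x y, ‖t ^ bc G w‖ := norm_sum_le _ _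
    _ ≤ ∑ _w ∈ G.finsetWalkLength m x y, (1 : ℝ) := by
        gcongr
        rw [norm_pow]
        exact pow_le_one₀ (norm_nonneg t) ht
    _ = (G.finsetWalkLength m x y).card := by simp

variable {G} {M : ℕ} {t : ℂ}

theorem sum_norm_Cent_row_le (hM : ∀ v, G.degree v ≤ M) (ht : ‖t‖ ≤ 1) (m : ℕ)
    (x : V) (s : Finset V) :
    ∑ y ∈ s, ‖Cent G t m x y‖ ≤ (M : ℝ) ^ m :=
  calc ∑ y ∈ s, ‖Cent G t m x y‖ ≤ ∑ y ∈ s, ((G.finsetWalkLength m x y).card : ℝ) := by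
        gcongr with y
        exact norm_Cent_le_card G ht m x y
    _ ≤ (M : ℝ) ^ m := by exact_mod_cast sum_card_finsetWalkLength_le G hM m x s

theorem sum_norm_Cent_col_le (hM : ∀ v, G.degree v ≤ M) (ht : ‖t‖ ≤ 1) (m : ℕ)
    (y : V) (s : Finset V) :
    ∑ x ∈ s, ‖Cent G t m x y‖ ≤ (M : ℝ) ^ m :=
  calc ∑ x ∈ s, ‖Cent G t m x y‖ ≤ ∑ x ∈ s, ((G.finsetWalkLength m y x).card : ℝ) := by
        gcongr with x
        rw [card_finsetWalkLength_comm]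
        exact norm_Cent_le_card G ht m x y
    _ ≤ (M : ℝ) ^ m := by exact_mod_cast sum_card_finsetWalkLength_le G hM m y s

end WalkCounting

theorem natCast_le_alpha (M : ℕ) (t : ℂ) : (M : ℝ) ≤ alpha M t := by
  have h : (M : ℝ) ≤ √((M : ℝ) ^ 2 + 4 * (‖t‖ + 1) * M) :=
    Real.le_sqrt_of_sq_le (by nlinarith [norm_nonneg t, M.cast_nonneg (α := ℝ)])
  rw [alpha]
  linarith

theorem norm_Cop_le_general {V : Type*} [DecidableEq V] (G : SimpleGraph V)
    [G.LocallyFinite] (M : ℕ) (hM : ∀ v : V, G.degree v ≤ M)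
    (t : ℂ) (ht : ‖t‖ < 1)
    (Cop : ℕ → (L2V V →L[ℂ] L2V V))
    (hCop : ∀ (m : ℕ) (x y : V), (Cop m (lp.single 2 y 1)) x = Cent G t m x y)
    (m : ℕ) :
    ‖Cop m‖ ≤ alpha M t ^ m := by
  have hrow := sum_norm_Cent_row_le hM ht.le m
  have hcol := sum_norm_Cent_col_le hM ht.le m
  simp only [← hCop] at hrow hcol
  calc ‖Cop m‖ ≤ √((M : ℝ) ^ m * (M : ℝ) ^ m) := (Cop m).opNorm_le_sqrt_mul_of_schur hrow hcol
    _ = (M : ℝ) ^ m := Real.sqrt_mul_self (by positivity)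
    _ ≤ alpha M t ^ m := pow_le_pow_left₀ M.cast_nonneg (natCast_le_alpha M t) m

/-- For a connected simple countable graph with degrees bounded by `M` and `|t| < 1`,
any family of bounded operators `C_m(t)` on `ℓ²(VX)` with matrix entries the weighted
path counts satisfies `‖C_m(t)‖ ≤ α(t)^m`. -/
theorem norm_Cop_le {V : Type*} [DecidableEq V] [Countable V] (G : SimpleGraph V)
    [G.LocallyFinite] (M : ℕ) (hconn : G.Connected) (hM : ∀ v : V, G.degree v ≤ M)
    (t : ℂ) (ht : ‖t‖ < 1)
    (Cop : ℕ → (L2V V →L[ℂ] L2V V))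
    (hCop : ∀ (m : ℕ) (x y : V), (Cop m (lp.single 2 y 1)) x = Cent G t m x y)
    (m : ℕ) :
    ‖Cop m‖ ≤ alpha M t ^ m :=
  norm_Cop_le_general G M hM t ht Cop hCop m

end BZ
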